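/- Let ν be a valuation on K[x]. For any two non-constant polynomials f, g ∈ K[x], one has ε(fg) = max{ε(f), ε(g)}. Moreover, if ε(f) < ε(g) < ∞, then I(fg) = I(g). -/

import Mathlib

/-!
Put `E = max (ε f) (ε g)` and call `b` tight for `f` at level `E` when
`ν f = ν (∂_b f) + b • E` (so `0` is always tight). By Leibniz,
`∂_b (f g) = ∑_{i + j = b} ∂_i f · ∂_j g`, and every term satisfies
`ν f + ν g ≤ ν (∂_i f · ∂_j g) + (i + j) • E`, with equality exactly when `i` is tight for `f`
and `j` is tight for `g`. Hence `E` bounds the drops of `f g`. If `p`, `q` are the largest tight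
indices of `f` and `g`, the term `(p, q)` is the unique minimal one in `∂_{p+q} (f g)`, so `p + q`
is tight for `f g`; and `p + q ≥ 1` because `E` is `ε f` or `ε g`. When `ε f < ε g = E`, the only
tight index of `f` is `0`, so the tight indices of `f g` are exactly those of `g`.
-/

open Polynomial

namespace KeyPolPaper

variable {K : Type*} [Field K] {Λ : Type*} [AddCommGroup Λ] [LinearOrder Λ] [IsOrderedAddMonoid Λ]

/-- A valuation on `F[X]` with values in `Λ ∪ {∞}`: multiplicative, satisfies the
ultrametric inequality, and is finite on nonzero constants. -/
def IsValuation {F : Type*} [Field F] (w : F[X] → WithTop Λ) : Prop :=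
  w 0 = ⊤ ∧ (∀ f g : F[X], w (f * g) = w f + w g) ∧
    (∀ f g : F[X], min (w f) (w g) ≤ w (f + g)) ∧
    ∀ a : F, a ≠ 0 → w (C a) ≠ ⊤

/-- `μ ≤ ν` for valuations on `K[X]`. -/
def ValLE (μ ν : K[X] → WithTop Λ) : Prop := ∀ f : K[X], μ f ≤ ν f

/-- `μ < ν` for valuations on `K[X]`. -/
def ValLT (μ ν : K[X] → WithTop Λ) : Prop := ValLE μ ν ∧ μ ≠ ν

/-- ν-equivalence: `f ∼_ν g` iff `ν (f - g) > ν f`. -/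
def VEquiv (ν : K[X] → WithTop Λ) (f g : K[X]) : Prop := ν f < ν (f - g)

/-- ν-divisibility: `h ∣_ν g` iff `g ∼_ν q * h` for some `q`. -/
def VDvd (ν : K[X] → WithTop Λ) (h g : K[X]) : Prop := ∃ q : K[X], VEquiv ν g (q * h)

/-- MacLane–Vaquié key polynomial: monic, ν-minimal and ν-irreducible. -/
def IsMLVKey (ν : K[X] → WithTop Λ) (φ : K[X]) : Prop :=
  φ.Monic ∧ (∀ f : K[X], f ≠ 0 → f.natDegree < φ.natDegree → ¬ VDvd ν φ f) ∧
    ¬ VDvd ν φ 1 ∧ ∀ f g : K[X], VDvd ν φ (f * g) → VDvd ν φ f ∨ VDvd ν φ g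

/-- `e` is the value `ε(f) = max_{b ≥ 1} (ν f - ν (∂_b f)) / b`; phrased multiplicatively,
`e` satisfies `ν f ≤ ν (∂_b f) + b • e` for all `b ≥ 1`, with equality for some `b ≥ 1`.
If `ν f = ∞` then `ε(f) = ∞`. -/
def IsEps (ν : K[X] → WithTop Λ) (f : K[X]) (e : WithTop Λ) : Prop :=
  (ν f = ⊤ ∧ e = ⊤) ∨
    (ν f ≠ ⊤ ∧ (∀ b : ℕ, 1 ≤ b → ν f ≤ ν (hasseDeriv b f) + b • e) ∧
      ∃ b : ℕ, 1 ≤ b ∧ ν f = ν (hasseDeriv b f) + b • e)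

/-- The invariant `ε(f)`; well defined (for non-constant `f`) since `Λ` is divisible and
the defining property determines `e` uniquely. -/
noncomputable def eps (ν : K[X] → WithTop Λ) (f : K[X]) : WithTop Λ :=
  letI := Classical.propDecidable (∃ e : WithTop Λ, IsEps ν f e)
  if h : ∃ e : WithTop Λ, IsEps ν f e then h.choose else ⊤

/-- The set `I(f)` of indices `b ≥ 1` with `ν (∂_b f) = ν f - b • ε(f)`. -/
def epsAttain (ν : K[X] → WithTop Λ) (f : K[X]) : Set ℕ :=
  {b : ℕ | 1 ≤ b ∧ ν f = ν (hasseDeriv b f) + b • eps ν f}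

/-- Abstract key polynomial for `ν`. -/
def IsKeyPoly (ν : K[X] → WithTop Λ) (Q : K[X]) : Prop :=
  Q.Monic ∧ 0 < Q.natDegree ∧
    ∀ f : K[X], 0 < f.natDegree → f.natDegree < Q.natDegree → eps ν f < eps ν Q

/-- The `s`-th coefficient of the canonical `Q`-expansion `f = Σ_s a_s Q^s`,
`deg a_s < deg Q`. -/
noncomputable def qCoeff (Q f : K[X]) (s : ℕ) : K[X] := ((· /ₘ Q)^[s] f) %ₘ Q

/-- The truncation `ν_Q (f) = min_s ν (a_s Q^s)`. -/
noncomputable def trunc (ν : K[X] → WithTop Λ) (Q f : K[X]) : WithTop Λ :=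
  (Finset.range (f.natDegree + 1)).inf fun s => ν (qCoeff Q f s * Q ^ s)

/-- `S_{ν,Q}(f)`: the set of indices attaining the minimum in `ν_Q(f)`. -/
def attain (ν : K[X] → WithTop Λ) (Q f : K[X]) : Set ℕ :=
  {s : ℕ | ν (qCoeff Q f s * Q ^ s) = trunc ν Q f}

/-- The augmented valuation `[μ; φ, γ] (f) = min_s (μ (a_s) + s • γ)` on φ-expansions. -/
noncomputable def augVal (μ : K[X] → WithTop Λ) (φ : K[X]) (γ : WithTop Λ) (f : K[X]) :
    WithTop Λ :=
  (Finset.range (f.natDegree + 1)).inf fun s => μ (qCoeff φ f s) + s • γ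

/-- `Φ_{μ,ν}`: monic polynomials of minimal degree with `μ φ < ν φ`. -/
def PhiSet (μ ν : K[X] → WithTop Λ) : Set K[X] :=
  {φ : K[X] | φ.Monic ∧ μ φ < ν φ ∧
    ∀ ψ : K[X], ψ.Monic → μ ψ < ν ψ → φ.natDegree ≤ ψ.natDegree}

/-- `mult f`: the least `b ≥ 1` with `∂_b f ≠ 0`. -/
noncomputable def multOf (f : K[X]) : ℕ := sInf {b : ℕ | 1 ≤ b ∧ hasseDeriv b f ≠ 0}

/-- Abstract limit key polynomial for `ν` (conditions (K1)-(K4)). -/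
def IsLimitKeyPoly (ν : K[X] → WithTop Λ) (Q : K[X]) : Prop :=
  Q.Monic ∧
    ∃ Qm : K[X], IsKeyPoly ν Qm ∧ ValLT (trunc ν Qm) ν ∧
      (∃ χ ∈ PhiSet (trunc ν Qm) ν, Qm.natDegree = χ.natDegree) ∧
      (∀ χ ∈ PhiSet (trunc ν Qm) ν, ∃ χ' ∈ PhiSet (trunc ν Qm) ν, ν χ < ν χ') ∧
      (∀ χ ∈ PhiSet (trunc ν Qm) ν, trunc ν χ Q < ν Q) ∧
      ∀ Q' : K[X], Q'.Monic →
        (∀ χ ∈ PhiSet (trunc ν Qm) ν, trunc ν χ Q' < ν Q') → Q.natDegree ≤ Q'.natDegree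

/-- A continuous MacLane chain of stable degree `m`: valuations `ρ_0 < ρ_1 < ⋯`,
monic key polynomials `χ_i` (for `i ≥ 1`) of degree `m`, with
`ρ_i = [ρ_{i-1}; χ_i, β_i]`, `β_i = ρ_i (χ_i) > ρ_{i-1} (χ_i)` and
`χ_{i+1} ∤_{ρ_i} χ_i`. -/
structure MacLaneChain (K : Type*) [Field K] (Λ : Type*) [AddCommGroup Λ] [LinearOrder Λ] [IsOrderedAddMonoid Λ] where
  m : ℕ
  hm : 0 < m
  ρ : ℕ → K[X] → WithTop Λ
  χ : ℕ → K[X]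
  β : ℕ → Λ
  isVal : ∀ i : ℕ, IsValuation (ρ i)
  mono : ∀ i : ℕ, ValLT (ρ i) (ρ (i + 1))
  monicChi : ∀ i : ℕ, (χ (i + 1)).Monic
  degChi : ∀ i : ℕ, (χ (i + 1)).natDegree = m
  keyChi : ∀ i : ℕ, IsMLVKey (ρ i) (χ (i + 1))
  beta_def : ∀ i : ℕ, ρ (i + 1) (χ (i + 1)) = (β (i + 1) : WithTop Λ)
  beta_lt : ∀ i : ℕ, ρ i (χ (i + 1)) < (β (i + 1) : WithTop Λ)
  aug : ∀ i : ℕ, ρ (i + 1) = augVal (ρ i) (χ (i + 1)) (β (i + 1) : WithTop Λ)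
  not_dvd : ∀ i : ℕ, ¬ VDvd (ρ (i + 1)) (χ (i + 2)) (χ (i + 1))

/-- A polynomial is stable w.r.t. the chain if its values `ρ_i f` are eventually constant. -/
def MacLaneChain.Stable (ch : MacLaneChain K Λ) (f : K[X]) : Prop :=
  ∃ i0 : ℕ, ∀ i : ℕ, i0 ≤ i → ch.ρ i f = ch.ρ i0 f

/-- The chain is essential: non-stable polynomials exist and all have degree `> m`. -/
def MacLaneChain.Essential (ch : MacLaneChain K Λ) : Prop :=
  (∃ f : K[X], ¬ ch.Stable f) ∧ ∀ f : K[X], ¬ ch.Stable f → ch.m < f.natDegree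

/-- MLV limit key polynomials of the chain: monic non-stable polynomials of minimal
degree `m_∞`. -/
def MacLaneChain.IsLimKP (ch : MacLaneChain K Λ) (φ : K[X]) : Prop :=
  φ.Monic ∧ ¬ ch.Stable φ ∧ ∀ f : K[X], ¬ ch.Stable f → φ.natDegree ≤ f.natDegree

/-- Convex subgroup of a linearly ordered abelian group. -/
def IsConvexSubgroup (H : AddSubgroup Λ) : Prop :=
  ∀ x y : Λ, 0 < x → x < y → y ∈ H → x ∈ H

/-- The value group of a valuation: the subgroup of `Λ` generated by the finite values. -/
def valueGroup {F : Type*} [Field F] (ρ : F[X] → WithTop Λ) : AddSubgroup Λ :=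
  AddSubgroup.closure {γ : Λ | ∃ f : F[X], ρ f = (γ : WithTop Λ)}

theorem IsValuation.map_mul {Γ F : Type*} [AddCommGroup Γ] [LinearOrder Γ] [Field F]
    {w : F[X] → WithTop Γ} (hw : IsValuation w) (f g : F[X]) : w (f * g) = w f + w g :=
  hw.2.1 f g

theorem IsValuation.map_one {Γ F : Type*} [AddCommGroup Γ] [LinearOrder Γ] [Field F]
    {w : F[X] → WithTop Γ} (hw : IsValuation w) : w 1 = 0 := by
  have hfin : w 1 ≠ ⊤ := by simpa using hw.2.2.2 1 one_ne_zero
  have hsq : w 1 = w 1 + w 1 := by rw [← hw.map_mul, one_mul]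
  lift w 1 to Γ using hfin with u
  exact_mod_cast left_eq_add.mp (WithTop.coe_eq_coe.mp hsq)

noncomputable def IsValuation.toAddValuation {F : Type*} [Field F] {w : F[X] → WithTop Λ}
    (hw : IsValuation w) : AddValuation F[X] (WithTop Λ) :=
  AddValuation.of w hw.1 hw.map_one hw.2.2.1 hw.map_mul

section ValuationSums

variable {F : Type*} [Field F] {w : F[X] → WithTop Λ} {ι : Type*} {s : Finset ι} {t : ι → F[X]}

theorem IsValuation.le_map_sum (hw : IsValuation w) {x : WithTop Λ} (h : ∀ i ∈ s, x ≤ w (t i)) :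
    x ≤ w (∑ i ∈ s, t i) :=
  hw.toAddValuation.map_le_sum h

theorem IsValuation.map_sum_eq_of_lt [DecidableEq ι] (hw : IsValuation w) {j : ι} (hj : j ∈ s)
    (h : ∀ i ∈ s, i ≠ j → w (t j) < w (t i)) : w (∑ i ∈ s, t i) = w (t j) :=
  Valuation.map_sum_eq_of_lt hw.toAddValuation hj fun i hi =>
    h i (Finset.mem_sdiff.1 hi).1 (by simpa using (Finset.mem_sdiff.1 hi).2)

theorem IsValuation.le_map_sum_add (hw : IsValuation w) (hs : s.Nonempty) {x c : WithTop Λ}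
    (h : ∀ i ∈ s, x ≤ w (t i) + c) : x ≤ w (∑ i ∈ s, t i) + c := by
  obtain ⟨i₀, hi₀, hmin⟩ := s.exists_min_image (fun i => w (t i)) hs
  exact (h i₀ hi₀).trans (add_le_add_left (hw.le_map_sum hmin) c)

theorem IsValuation.lt_map_sum_add (hw : IsValuation w) (hs : s.Nonempty) {x c : WithTop Λ}
    (h : ∀ i ∈ s, x < w (t i) + c) : x < w (∑ i ∈ s, t i) + c := by
  obtain ⟨i₀, hi₀, hmin⟩ := s.exists_min_image (fun i => w (t i)) hs
  exact (h i₀ hi₀).trans_le (add_le_add_left (hw.le_map_sum hmin) c)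

end ValuationSums

theorem _root_.WithTop.nsmul_top_of_ne_zero {α : Type*} [AddMonoid α] {n : ℕ} (hn : n ≠ 0) :
    n • (⊤ : WithTop α) = ⊤ := by
  obtain ⟨k, rfl⟩ := Nat.exists_eq_succ_of_ne_zero hn
  rfl

theorem _root_.WithTop.le_of_nsmul_le_nsmul {n : ℕ} (hn : n ≠ 0) {a b : WithTop Λ}
    (h : n • a ≤ n • b) : a ≤ b := by
  induction b using WithTop.recTopCoe with
  | top => exact le_top
  | coe b =>
    induction a using WithTop.recTopCoe with
    | top => simp [WithTop.nsmul_top_of_ne_zero hn, ← WithTop.coe_nsmul] at h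
    | coe a =>
      norm_cast at h ⊢
      exact le_of_nsmul_le_nsmul_right hn h

variable {ν : K[X] → WithTop Λ} {f g : K[X]} {e e' : WithTop Λ}

/-- `ε(f)` is the least `e` with `IsHasseBound ν f e`, and `I(f) ∪ {0} = hasseTight ν f (ε f)`. -/
def IsHasseBound (ν : K[X] → WithTop Λ) (f : K[X]) (e : WithTop Λ) : Prop :=
  ∀ b : ℕ, ν f ≤ ν (hasseDeriv b f) + b • e

def hasseTight (ν : K[X] → WithTop Λ) (f : K[X]) (e : WithTop Λ) : Set ℕ :=
  {b : ℕ | ν f = ν (hasseDeriv b f) + b • e}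

theorem zero_mem_hasseTight {Γ : Type*} [AddCommGroup Γ] {w : K[X] → WithTop Γ} {f : K[X]}
    {e : WithTop Γ} : 0 ∈ hasseTight w f e := by
  simp [hasseTight]

theorem IsHasseBound.mono (h : IsHasseBound ν f e) (he : e ≤ e') : IsHasseBound ν f e' :=
  fun b => (h b).trans (by gcongr)

theorem ne_top_of_mem_hasseTight (hf : ν f ≠ ⊤) {b : ℕ} (hb : 0 < b) (h : b ∈ hasseTight ν f e) :
    e ≠ ⊤ := by
  rintro rfl
  exact hf (by rw [h, WithTop.nsmul_top_of_ne_zero hb.ne', add_top])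

theorem le_of_mem_hasseTight (hf : ν f ≠ ⊤) {b : ℕ} (hb : 0 < b) (h : b ∈ hasseTight ν f e)
    (hbound : IsHasseBound ν f e') : e ≤ e' := by
  have hfin : ν (hasseDeriv b f) ≠ ⊤ := fun htop => hf (by rw [h, htop, top_add])
  have := h.symm.le.trans (hbound b)
  exact WithTop.le_of_nsmul_le_nsmul hb.ne' ((WithTop.add_le_add_iff_left hfin).1 this)

theorem hasseTight_eq_singleton_zero (hf : ν f ≠ ⊤) (hbound : IsHasseBound ν f e') (he : e' < e) :
    hasseTight ν f e = {0} := by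
  refine Set.eq_singleton_iff_unique_mem.2 ⟨zero_mem_hasseTight, fun b hb => ?_⟩
  by_contra hb0
  exact he.not_ge (le_of_mem_hasseTight hf (Nat.pos_of_ne_zero hb0) hb hbound)

theorem le_natDegree_of_mem_hasseTight (hν : IsValuation ν) (hf : ν f ≠ ⊤) {b : ℕ}
    (h : b ∈ hasseTight ν f e) : b ≤ f.natDegree := by
  by_contra hlt
  rw [hasseTight, Set.mem_ofPred_eq, hasseDeriv_eq_zero_of_lt_natDegree f b (not_le.1 hlt),
    hν.1, top_add] at h
  exact hf h

theorem exists_isGreatest_hasseTight (hν : IsValuation ν) (hf : ν f ≠ ⊤) :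
    ∃ p, IsGreatest (hasseTight ν f e) p :=
  ⟨_, Nat.sSup_mem ⟨0, zero_mem_hasseTight⟩ ⟨_, fun _ => le_natDegree_of_mem_hasseTight hν hf⟩,
    fun _ hb => le_csSup ⟨_, fun _ => le_natDegree_of_mem_hasseTight hν hf⟩ hb⟩

section Leibniz

open Finset.HasAntidiagonal

variable (hν : IsValuation ν)
include hν

theorem add_le_map_hasseDeriv_mul (hf : IsHasseBound ν f e) (hg : IsHasseBound ν g e) (i j : ℕ) :
    ν f + ν g ≤ ν (hasseDeriv i f * hasseDeriv j g) + (i + j) • e := by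
  rw [hν.map_mul, add_nsmul, add_add_add_comm]
  exact add_le_add (hf i) (hg j)

theorem add_lt_map_hasseDeriv_mul (hf₀ : ν f ≠ ⊤) (hg₀ : ν g ≠ ⊤) (hf : IsHasseBound ν f e)
    (hg : IsHasseBound ν g e) {i j : ℕ} (hij : i ∉ hasseTight ν f e ∨ j ∉ hasseTight ν g e) :
    ν f + ν g < ν (hasseDeriv i f * hasseDeriv j g) + (i + j) • e := by
  rw [hν.map_mul, add_nsmul, add_add_add_comm]
  rcases hij with hi | hj
  · exact WithTop.add_lt_add_of_lt_of_le hg₀ ((hf i).lt_of_ne hi) (hg j)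
  · exact WithTop.add_lt_add_of_le_of_lt hf₀ (hf i) ((hg j).lt_of_ne hj)

theorem IsHasseBound.mul (hf : IsHasseBound ν f e) (hg : IsHasseBound ν g e) :
    IsHasseBound ν (f * g) e := by
  intro b
  rw [hasseDeriv_mul, hν.map_mul]
  refine hν.le_map_sum_add ⟨(0, b), by simp⟩ fun ij hij => ?_
  rw [← mem_antidiagonal.1 hij]
  exact add_le_map_hasseDeriv_mul hν hf hg ij.1 ij.2

theorem not_mem_hasseTight_mul (hf₀ : ν f ≠ ⊤) (hg₀ : ν g ≠ ⊤) (hf : IsHasseBound ν f e)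
    (hg : IsHasseBound ν g e) {b : ℕ}
    (h : ∀ ij ∈ antidiagonal b, ij.1 ∉ hasseTight ν f e ∨ ij.2 ∉ hasseTight ν g e) :
    b ∉ hasseTight ν (f * g) e := by
  have hlt : ν (f * g) < ν (hasseDeriv b (f * g)) + b • e := by
    rw [hasseDeriv_mul, hν.map_mul]
    refine hν.lt_map_sum_add ⟨(0, b), by simp⟩ fun ij hij => ?_
    rw [← mem_antidiagonal.1 hij]
    exact add_lt_map_hasseDeriv_mul hν hf₀ hg₀ hf hg (h ij hij)
  exact hlt.ne

theorem add_mem_hasseTight_mul (he : e ≠ ⊤) (hf₀ : ν f ≠ ⊤) (hg₀ : ν g ≠ ⊤)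
    (hf : IsHasseBound ν f e) (hg : IsHasseBound ν g e) {p q : ℕ} (hp : p ∈ hasseTight ν f e)
    (hq : q ∈ hasseTight ν g e) (h : ∀ ij ∈ antidiagonal (p + q), ij ≠ (p, q) →
      ij.1 ∉ hasseTight ν f e ∨ ij.2 ∉ hasseTight ν g e) :
    p + q ∈ hasseTight ν (f * g) e := by
  have hpq : ν f + ν g = ν (hasseDeriv p f * hasseDeriv q g) + (p + q) • e := by
    rw [hν.map_mul, add_nsmul, add_add_add_comm, ← hp, ← hq]
  have hpq_fin : (p + q) • e ≠ ⊤ := by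
    lift e to Λ using he
    rw [← WithTop.coe_nsmul]
    exact WithTop.coe_ne_top
  have hmin : ∀ ij ∈ antidiagonal (p + q), ij ≠ (p, q) →
      ν (hasseDeriv p f * hasseDeriv q g) < ν (hasseDeriv ij.1 f * hasseDeriv ij.2 g) := by
    intro ij hij hne
    refine (WithTop.add_lt_add_iff_right hpq_fin).1 ?_
    rw [← hpq, ← mem_antidiagonal.1 hij]
    exact add_lt_map_hasseDeriv_mul hν hf₀ hg₀ hf hg (h ij hij hne)
  show ν (f * g) = _
  rw [hasseDeriv_mul, hν.map_sum_eq_of_lt (by simp) hmin, hν.map_mul, hpq]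

theorem add_mem_hasseTight_mul_of_isGreatest (he : e ≠ ⊤) (hf₀ : ν f ≠ ⊤) (hg₀ : ν g ≠ ⊤)
    (hf : IsHasseBound ν f e) (hg : IsHasseBound ν g e) {p q : ℕ}
    (hp : IsGreatest (hasseTight ν f e) p) (hq : IsGreatest (hasseTight ν g e) q) :
    p + q ∈ hasseTight ν (f * g) e := by
  refine add_mem_hasseTight_mul hν he hf₀ hg₀ hf hg hp.1 hq.1 fun ij hij hne => ?_
  have hsum := mem_antidiagonal.1 hij
  by_contra! h
  exact hne (Prod.ext (by linarith [hp.2 h.1, hq.2 h.2]) (by linarith [hp.2 h.1, hq.2 h.2]))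

theorem hasseTight_mul_eq_of_eq_singleton_zero (he : e ≠ ⊤) (hf₀ : ν f ≠ ⊤) (hg₀ : ν g ≠ ⊤)
    (hf : IsHasseBound ν f e) (hg : IsHasseBound ν g e) (h0 : hasseTight ν f e = {0}) :
    hasseTight ν (f * g) e = hasseTight ν g e := by
  ext b
  refine ⟨fun hb => ?_, fun hb => ?_⟩
  · by_contra hbg
    refine not_mem_hasseTight_mul hν hf₀ hg₀ hf hg (fun ij hij => ?_) hb
    rw [h0, Set.mem_singleton_iff]
    by_cases hi : ij.1 = 0
    · exact Or.inr (by rwa [← mem_antidiagonal.1 hij, hi, zero_add] at hbg)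
    · exact Or.inl hi
  · have h0b := add_mem_hasseTight_mul hν he hf₀ hg₀ hf hg (h0 ▸ Set.mem_singleton 0) hb
      fun ij hij hne => by
        rw [h0, Set.mem_singleton_iff]
        refine Or.inl fun hi => hne (Prod.ext hi ?_)
        simpa [hi] using mem_antidiagonal.1 hij
    rwa [zero_add] at h0b

end Leibniz

theorem isEps_iff {Γ : Type*} [AddCommGroup Γ] [LinearOrder Γ] {w : K[X] → WithTop Γ}
    {f : K[X]} {e : WithTop Γ} (hf : w f ≠ ⊤) :
    IsEps w f e ↔ IsHasseBound w f e ∧ ∃ b, 0 < b ∧ b ∈ hasseTight w f e := by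
  refine ⟨?_, fun ⟨hbound, b, hb, htight⟩ => Or.inr ⟨hf, fun b _ => hbound b, b, hb, htight⟩⟩
  rintro (⟨htop, -⟩ | ⟨-, hbound, b, hb, htight⟩)
  · exact absurd htop hf
  refine ⟨fun b => ?_, b, hb, htight⟩
  rcases Nat.eq_zero_or_pos b with rfl | hb
  · simp
  · exact hbound b hb

theorem IsEps.unique (h : IsEps ν f e) (h' : IsEps ν f e') : e = e' := by
  rcases eq_or_ne (ν f) ⊤ with htop | hf
  · rcases h with ⟨-, rfl⟩ | ⟨hf, -⟩
    · rcases h' with ⟨-, rfl⟩ | ⟨hf, -⟩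
      · rfl
      · exact absurd htop hf
    · exact absurd htop hf
  obtain ⟨hbound, b, hb, htight⟩ := (isEps_iff hf).1 h
  obtain ⟨hbound', b', hb', htight'⟩ := (isEps_iff hf).1 h'
  exact le_antisymm (le_of_mem_hasseTight hf hb htight hbound')
    (le_of_mem_hasseTight hf hb' htight' hbound)

theorem eps_eq_of_isEps (h : IsEps ν f e) : eps ν f = e := by
  have hex : ∃ e, IsEps ν f e := ⟨e, h⟩
  rw [eps, dif_pos hex]
  exact hex.choose_spec.unique h

theorem eps_eq_top (h : ν f = ⊤) : eps ν f = ⊤ :=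
  eps_eq_of_isEps (Or.inl ⟨h, rfl⟩)

variable [Module ℚ Λ]

theorem exists_tight_nsmul_bound {B : Finset ℕ} (hB : B.Nonempty) (hpos : ∀ b ∈ B, 0 < b)
    (a : Λ) (c : ℕ → Λ) : ∃ e : Λ, (∀ b ∈ B, a ≤ c b + b • e) ∧ ∃ b ∈ B, a = c b + b • e := by
  have hscale : ∀ b ∈ B, ∀ x : Λ, b • ((b : ℚ)⁻¹ • x) = x := fun b hb x => by
    rw [← Nat.cast_smul_eq_nsmul ℚ, smul_smul,
      mul_inv_cancel₀ (Nat.cast_ne_zero.2 (hpos b hb).ne'), one_smul]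
  let slope : ℕ → Λ := fun b => (b : ℚ)⁻¹ • (a - c b)
  obtain ⟨b₀, hb₀, hmax⟩ := B.exists_mem_eq_sup' hB slope
  refine ⟨B.sup' hB slope, fun b hb => ?_, b₀, hb₀, ?_⟩
  · have := nsmul_le_nsmul_right (B.le_sup' slope hb) b
    rw [hscale b hb] at this
    exact sub_le_iff_le_add'.1 this
  · rw [hmax, hscale b₀ hb₀, add_sub_cancel]

/-- Only `1 ≤ b ≤ deg f` with `ν (∂_b f) ≠ ⊤` matter, and `b = deg f` is one of them since
`∂_{deg f} f` is the leading coefficient. -/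
theorem exists_isEps (hν : IsValuation ν) (hf : 0 < f.natDegree) : ∃ e, IsEps ν f e := by
  classical
  rcases eq_or_ne (ν f) ⊤ with htop | hfin
  · exact ⟨⊤, Or.inl ⟨htop, rfl⟩⟩
  let B := (Finset.Icc 1 f.natDegree).filter fun b => ν (hasseDeriv b f) ≠ ⊤
  have hle_deg : ∀ b, ν (hasseDeriv b f) ≠ ⊤ → b ≤ f.natDegree := fun b hb => by
    by_contra hlt
    exact hb (by rw [hasseDeriv_eq_zero_of_lt_natDegree f b (not_le.1 hlt), hν.1])
  have hdeg : f.natDegree ∈ B := by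
    have hf0 : f ≠ 0 := by rintro rfl; simp at hf
    simp only [B, Finset.mem_filter, Finset.mem_Icc, hasseDeriv_natDegree_eq_C]
    exact ⟨⟨hf, le_rfl⟩, hν.2.2.2 _ (leadingCoeff_ne_zero.2 hf0)⟩
  have hcoe : ∀ b ∈ B, (((ν (hasseDeriv b f)).untopD 0 : Λ) : WithTop Λ) = ν (hasseDeriv b f) :=
    fun b hb => by
      obtain ⟨c, hc⟩ := WithTop.ne_top_iff_exists.1 (Finset.mem_filter.1 hb).2
      rw [← hc, WithTop.untopD_coe]
  have hpos : ∀ b ∈ B, 0 < b := fun b hb => (Finset.mem_Icc.1 (Finset.mem_filter.1 hb).1).1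
  obtain ⟨e, hle, b₀, hb₀, heq⟩ := exists_tight_nsmul_bound ⟨_, hdeg⟩ hpos
    ((ν f).untop hfin) (fun b => (ν (hasseDeriv b f)).untopD 0)
  refine ⟨e, (isEps_iff hfin).2 ⟨fun b => ?_, b₀, hpos b₀ hb₀, ?_⟩⟩
  · rcases eq_or_ne (ν (hasseDeriv b f)) ⊤ with htop | hfin_b
    · simp [htop]
    rcases Nat.eq_zero_or_pos b with rfl | hb_pos
    · simp
    have hb : b ∈ B := Finset.mem_filter.2 ⟨Finset.mem_Icc.2 ⟨hb_pos, hle_deg b hfin_b⟩, hfin_b⟩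
    rw [← hcoe b hb, ← WithTop.coe_untop (ν f) hfin]
    exact_mod_cast hle b hb
  · show ν f = _
    rw [← hcoe b₀ hb₀, ← WithTop.coe_untop (ν f) hfin]
    exact_mod_cast heq

theorem isEps_eps (hν : IsValuation ν) (hf : 0 < f.natDegree) : IsEps ν f (eps ν f) := by
  obtain ⟨e, he⟩ := exists_isEps hν hf
  rwa [eps_eq_of_isEps he]

theorem isEps_mul_max (hν : IsValuation ν) (hf : 0 < f.natDegree) (hg : 0 < g.natDegree)
    (hf₀ : ν f ≠ ⊤) (hg₀ : ν g ≠ ⊤) : IsEps ν (f * g) (max (eps ν f) (eps ν g)) := by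
  obtain ⟨hf_bound, b, hb, hb_tight⟩ := (isEps_iff hf₀).1 (isEps_eps hν hf)
  obtain ⟨hg_bound, c, hc, hc_tight⟩ := (isEps_iff hg₀).1 (isEps_eps hν hg)
  have hE : max (eps ν f) (eps ν g) ≠ ⊤ :=
    (max_lt (ne_top_of_mem_hasseTight hf₀ hb hb_tight).lt_top
      (ne_top_of_mem_hasseTight hg₀ hc hc_tight).lt_top).ne
  have hf_bound' := hf_bound.mono (le_max_left _ (eps ν g))
  have hg_bound' := hg_bound.mono (le_max_right (eps ν f) _)
  obtain ⟨p, hp⟩ := exists_isGreatest_hasseTight hν hf₀ (e := max (eps ν f) (eps ν g))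
  obtain ⟨q, hq⟩ := exists_isGreatest_hasseTight hν hg₀ (e := max (eps ν f) (eps ν g))
  have hpq : 0 < p + q := by
    rcases max_choice (eps ν f) (eps ν g) with h | h
    · rw [← h] at hb_tight
      linarith [hp.2 hb_tight]
    · rw [← h] at hc_tight
      linarith [hq.2 hc_tight]
  refine (isEps_iff (by rw [hν.map_mul]; exact WithTop.add_ne_top.2 ⟨hf₀, hg₀⟩)).2
    ⟨hf_bound'.mul hν hg_bound', p + q, hpq, ?_⟩
  exact add_mem_hasseTight_mul_of_isGreatest hν hE hf₀ hg₀ hf_bound' hg_bound' hp hq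

theorem epsAttain_mul_of_eps_lt (hν : IsValuation ν) (hf : 0 < f.natDegree)
    (hg : 0 < g.natDegree) (hf₀ : ν f ≠ ⊤) (hg₀ : ν g ≠ ⊤) (hlt : eps ν f < eps ν g) :
    epsAttain ν (f * g) = epsAttain ν g := by
  obtain ⟨hf_bound, -⟩ := (isEps_iff hf₀).1 (isEps_eps hν hf)
  obtain ⟨hg_bound, c, hc, hc_tight⟩ := (isEps_iff hg₀).1 (isEps_eps hν hg)
  have heps : eps ν (f * g) = eps ν g := by
    rw [eps_eq_of_isEps (isEps_mul_max hν hf hg hf₀ hg₀), max_eq_right hlt.le]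
  have htight := hasseTight_mul_eq_of_eq_singleton_zero hν
    (ne_top_of_mem_hasseTight hg₀ hc hc_tight) hf₀ hg₀ (hf_bound.mono hlt.le) hg_bound
    (hasseTight_eq_singleton_zero hf₀ hf_bound hlt)
  ext b
  simp only [epsAttain, Set.mem_ofPred_eq, heps]
  exact and_congr_right fun _ => Set.ext_iff.1 htight b

/-- `ε(fg) = max (ε(f), ε(g))`; moreover if `ε(f) < ε(g) < ∞` then
`I(fg) = I(g)`. -/
theorem stmt1 (ν : K[X] → WithTop Λ) (hν : IsValuation ν)
    (f g : K[X]) (hf : 0 < f.natDegree) (hg : 0 < g.natDegree) :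
    eps ν (f * g) = max (eps ν f) (eps ν g) ∧
      (eps ν f < eps ν g → eps ν g < ⊤ → epsAttain ν (f * g) = epsAttain ν g) := by
  rcases eq_or_ne (ν f) ⊤ with hf_top | hf₀
  · have hfg_top : ν (f * g) = ⊤ := by rw [hν.map_mul, hf_top, top_add]
    simp [eps_eq_top hf_top, eps_eq_top hfg_top]
  rcases eq_or_ne (ν g) ⊤ with hg_top | hg₀
  · have hfg_top : ν (f * g) = ⊤ := by rw [hν.map_mul, hg_top, add_top]
    simp [eps_eq_top hg_top, eps_eq_top hfg_top]
  exact ⟨eps_eq_of_isEps (isEps_mul_max hν hf hg hf₀ hg₀),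
    fun hlt _ => epsAttain_mul_of_eps_lt hν hf hg hf₀ hg₀ hlt⟩

end KeyPolPaper
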